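/- For every integer n ≥ 2, the difference T*(n) = T(n) − T(n−1) equals the sum of T(r−1) over all divisors r of n with 1 ≤ r < n, i.e. T(n) − T(n−1) = Σ_{r | n, r < n} T(r−1). -/

import Mathlib

/-!
Allowing the empty sequence, with `f [] = 0`, the sequences counted by `T m` are exactly the
sequences of positive integers with `f A = m`, for every `m` including `0`. Splitting off the
last term of a sequence with `f A = n ≠ 0` writes `A = A' ++ [n / r]` with `r = f A' + 1` a
divisor of `n`, so `T n = ∑_{r ∣ n} T (r - 1)`. Removing the summand `r = n` gives the theorem.
-/

/-- `f (a₁,…,a_k)` defined by `f(a₁) = a₁`, `f(a₁,…,a_{i+1}) = (f(a₁,…,a_i) + 1) · a_{i+1}`. -/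
def f (l : List ℕ) : ℕ := l.foldl (fun acc a => (acc + 1) * a) 0

/-- `T n` is the number of nonempty finite sequences of positive integers with `f A = n`,
with the additional convention `T 0 = 1`. -/
noncomputable def T : ℕ → ℕ
  | 0 => 1
  | n + 1 => Nat.card {l : List ℕ // l ≠ [] ∧ (∀ a ∈ l, 0 < a) ∧ f l = n + 1}

@[simp]
lemma f_nil : f [] = 0 := rfl

def posSeqs (m : ℕ) : Set (List ℕ) := {l | (∀ a ∈ l, 0 < a) ∧ f l = m}

lemma f_append_singleton (l : List ℕ) (a : ℕ) : f (l ++ [a]) = (f l + 1) * a := by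
  simp [f, List.foldl_append]

lemma f_ne_zero {l : List ℕ} (hl : l ≠ []) (hpos : ∀ a ∈ l, 0 < a) : f l ≠ 0 := by
  obtain ⟨l', a, rfl⟩ := List.eq_nil_or_concat l |>.resolve_left hl
  rw [List.concat_eq_append, f_append_singleton]
  exact Nat.mul_ne_zero (Nat.succ_ne_zero _) (hpos a (by simp)).ne'

lemma posSeqs_zero : posSeqs 0 = {[]} := by
  ext l
  refine ⟨fun ⟨hpos, hf⟩ => ?_, by rintro rfl; simp [posSeqs]⟩
  by_contra hl
  exact f_ne_zero hl hpos hf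

lemma T_eq_card_posSeqs (m : ℕ) : T m = Nat.card (posSeqs m) := by
  cases m with
  | zero => simp [T, posSeqs_zero]
  | succ m =>
    have hsets : {l : List ℕ | l ≠ [] ∧ (∀ a ∈ l, 0 < a) ∧ f l = m + 1} = posSeqs (m + 1) := by
      ext l
      refine ⟨fun h => h.2, fun h => ⟨?_, h⟩⟩
      rintro rfl
      simp [posSeqs] at h
    exact congrArg (fun s : Set (List ℕ) => Nat.card s) hsets

def appendQuotient (n : ℕ) : (Σ r : n.divisors, posSeqs (r - 1)) → posSeqs n :=
  fun ⟨⟨r, hr⟩, ⟨l, hpos, hf⟩⟩ =>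
    ⟨l ++ [n / r], by
      refine ⟨fun a ha => ?_, ?_⟩
      · rcases List.mem_append.mp ha with ha | ha
        · exact hpos a ha
        · rw [List.mem_singleton.mp ha]
          exact Nat.div_pos (Nat.divisor_le hr) (Nat.pos_of_mem_divisors hr)
      · rw [f_append_singleton, hf, Nat.sub_add_cancel (Nat.pos_of_mem_divisors hr)]
        exact Nat.mul_div_cancel' (Nat.dvd_of_mem_divisors hr)⟩

lemma appendQuotient_bijective {n : ℕ} (hn : n ≠ 0) : Function.Bijective (appendQuotient n) := by
  constructor
  · rintro ⟨⟨r, hr⟩, ⟨l, _, hf⟩⟩ ⟨⟨s, hs⟩, ⟨l', _, hf'⟩⟩ h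
    obtain ⟨rfl, -⟩ := List.append_inj' (congrArg Subtype.val h) rfl
    have hrs : r = s := by
      have hf : f l = r - 1 := hf
      have hf' : f l = s - 1 := hf'
      have := Nat.pos_of_mem_divisors hr
      have := Nat.pos_of_mem_divisors hs
      omega
    subst hrs
    rfl
  · rintro ⟨l, hpos, hf⟩
    have hl : l ≠ [] := by rintro rfl; exact hn hf.symm
    obtain ⟨l', a, rfl⟩ := List.eq_nil_or_concat l |>.resolve_left hl
    rw [List.concat_eq_append, f_append_singleton] at hf
    have hr : f l' + 1 ∈ n.divisors := Nat.mem_divisors.mpr ⟨⟨a, hf.symm⟩, hn⟩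
    refine ⟨⟨⟨f l' + 1, hr⟩, ⟨l', fun b hb => hpos b (by simp [hb]), rfl⟩⟩, ?_⟩
    simp only [appendQuotient, List.concat_eq_append, ← hf,
      Nat.mul_div_cancel_left a (Nat.succ_pos _)]

lemma posSeqs_finite (m : ℕ) : (posSeqs m).Finite := by
  induction m using Nat.strong_induction_on with
  | _ n ih =>
    rcases eq_or_ne n 0 with rfl | hn
    · simp [posSeqs_zero]
    · have : ∀ r : n.divisors, Finite (posSeqs (r - 1)) := fun ⟨r, hr⟩ =>
        have := Nat.divisor_le hr
        have := Nat.pos_of_mem_divisors hr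
        (ih (r - 1) (by omega)).to_subtype
      have := Finite.of_surjective _ (appendQuotient_bijective hn).2
      exact Set.toFinite _

lemma T_eq_sum_divisors {n : ℕ} (hn : n ≠ 0) : T n = ∑ r ∈ n.divisors, T (r - 1) := by
  have : ∀ r : n.divisors, Finite (posSeqs (r - 1)) := fun r => (posSeqs_finite _).to_subtype
  rw [T_eq_card_posSeqs, ← Nat.card_congr (Equiv.ofBijective _ (appendQuotient_bijective hn)),
    Nat.card_sigma, ← Finset.sum_coe_sort n.divisors]
  simp only [T_eq_card_posSeqs]

theorem Tstar_eq_sum_properDivisors_general (n : ℕ) :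
    (T n : ℤ) - T (n - 1) = ∑ r ∈ n.properDivisors, (T (r - 1) : ℤ) := by
  rcases eq_or_ne n 0 with rfl | hn
  · simp
  rw [T_eq_sum_divisors hn, ← Nat.cons_self_properDivisors hn, Finset.sum_cons]
  push_cast
  ring

theorem Tstar_eq_sum_properDivisors (n : ℕ) (hn : 2 ≤ n) :
    (T n : ℤ) - T (n - 1) = ∑ r ∈ n.properDivisors, (T (r - 1) : ℤ) :=
  Tstar_eq_sum_properDivisors_general n
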